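/- Let P ⊆ ℝ^d be a polytope with nonempty interior, and let F₁ and F₂ be a strictly antipodal pair of faces of P whose distance ρ(F₁,F₂) equals the minimum width ω(P). Then the Minkowski sum F₁ + F₂ has affine dimension d − 1. -/

import Mathlib

open Set Metric Pointwise

noncomputable section

variable {d : ℕ}

abbrev Euc (d : ℕ) := EuclideanSpace ℝ (Fin d)

/-- A polytope is the convex hull of finitely many points. -/
def IsPolytope (P : Set (Euc d)) : Prop :=
  ∃ V : Finset (Euc d), P = convexHull ℝ (V : Set (Euc d))

/-- A convex body is a compact convex set with nonempty interior. -/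
def IsConvexBody (K : Set (Euc d)) : Prop :=
  Convex ℝ K ∧ IsCompact K ∧ (interior K).Nonempty

/-- Support function. -/
def suppFn (K : Set (Euc d)) (u : Euc d) : ℝ :=
  sSup {r | ∃ x ∈ K, r = inner ℝ u x}

/-- Width in direction `u`. -/
def dirWidth (K : Set (Euc d)) (u : Euc d) : ℝ :=
  suppFn K u + suppFn K (-u)

/-- Minimum width. -/
def minWidth (K : Set (Euc d)) : ℝ :=
  sInf {r | ∃ u : Euc d, ‖u‖ = 1 ∧ r = dirWidth K u}

/-- A convex body is reduced if every convex body properly contained in it has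
strictly smaller minimum width. -/
def IsReducedBody (K : Set (Euc d)) : Prop :=
  IsConvexBody K ∧ ∀ K' : Set (Euc d), IsConvexBody K' → K' ⊂ K → minWidth K' < minWidth K

/-- The intersection of `P` with the supporting hyperplane with outer normal `u`. -/
def suppSet (P : Set (Euc d)) (u : Euc d) : Set (Euc d) :=
  P ∩ {x | (inner ℝ u x : ℝ) = suppFn P u}

/-- A (proper, nonempty) face of a polytope. -/
def IsFaceOf (P F : Set (Euc d)) : Prop :=
  ∃ u : Euc d, ‖u‖ = 1 ∧ F = suppSet P u

/-- Affine dimension of a set. -/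
def affDim (A : Set (Euc d)) : ℕ :=
  Module.finrank ℝ (affineSpan ℝ A).direction

def IsVertexOf (P : Set (Euc d)) (v : Euc d) : Prop :=
  IsFaceOf P {v}

def IsEdgeOf (P F : Set (Euc d)) : Prop :=
  IsFaceOf P F ∧ affDim F = 1

def IsFacetOf (P F : Set (Euc d)) : Prop :=
  IsFaceOf P F ∧ affDim F = d - 1

/-- Distinct faces `F₁`, `F₂` are strictly antipodal if there is a unit direction `u`
with `H(P,u) ∩ P = F₁` and `H(P,-u) ∩ P = F₂`. -/
def StrictlyAntipodal (P F₁ F₂ : Set (Euc d)) : Prop :=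
  F₁ ≠ F₂ ∧ ∃ u : Euc d, ‖u‖ = 1 ∧ suppSet P u = F₁ ∧ suppSet P (-u) = F₂

/-- Distance between the affine hulls of `A` and `B`. -/
def affDist (A B : Set (Euc d)) : ℝ :=
  sInf {r | ∃ x ∈ (affineSpan ℝ A : Set (Euc d)), ∃ y ∈ (affineSpan ℝ B : Set (Euc d)),
    r = dist x y}

/-!
The affine hulls of `F₁ = suppSet P u` and `F₂ = suppSet P (-u)` lie in the two supporting
hyperplanes orthogonal to `u`, so `ω(P) = ρ(F₁, F₂) ≥ w(P, u) ≥ ω(P)` and `u` is a direction of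
minimal width. The directions of `F₁ + F₂` span a subspace of `u^⊥`; if it were proper, some
`v ≠ 0` orthogonal to `u` would be orthogonal to both faces, so `⟪v, ·⟫` takes constant values
`c₁`, `c₂` on them. Since `P` has finitely many vertices, for small `t` the faces still support
`P` in the directions `±(u + t • v)`, so `w(P, u + t • v) = w(P, u) + t (c₁ - c₂)`. Choosing the
sign of `t` with `t (c₁ - c₂) ≤ 0` and normalising by `‖u + t • v‖ > 1` gives a direction of
width `< ω(P)`.
-/

open Filter Topology
open scoped RealInnerProductSpace

theorem vectorSpan_add {k V : Type*} [Ring k] [AddCommGroup V] [Module k V] {s t : Set V}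
    (hs : s.Nonempty) (ht : t.Nonempty) :
    vectorSpan k (s + t) = vectorSpan k s ⊔ vectorSpan k t := by
  obtain ⟨a₀, ha₀⟩ := hs
  obtain ⟨b₀, hb₀⟩ := ht
  apply le_antisymm
  · rw [vectorSpan_def, Submodule.span_le]
    rintro _ ⟨_, ⟨a, ha, b, hb, rfl⟩, _, ⟨a', ha', b', hb', rfl⟩, rfl⟩
    dsimp only
    rw [vsub_eq_sub, add_sub_add_comm]
    exact Submodule.add_mem_sup (vsub_mem_vectorSpan k ha ha') (vsub_mem_vectorSpan k hb hb')
  · refine sup_le (Submodule.span_le.2 ?_) (Submodule.span_le.2 ?_)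
    · rintro _ ⟨a, ha, a', ha', rfl⟩
      dsimp only
      rw [vsub_eq_sub, ← add_sub_add_right_eq_sub a a' b₀]
      exact vsub_mem_vectorSpan k (add_mem_add ha hb₀) (add_mem_add ha' hb₀)
    · rintro _ ⟨b, hb, b', hb', rfl⟩
      dsimp only
      rw [vsub_eq_sub, ← add_sub_add_left_eq_sub b b' a₀]
      exact vsub_mem_vectorSpan k (add_mem_add ha₀ hb) (add_mem_add ha₀ hb')

section InnerProductSpace

variable {𝕜 E : Type*} [RCLike 𝕜] [NormedAddCommGroup E] [InnerProductSpace 𝕜 E]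

theorem Submodule.eq_of_le_of_orthogonal_inf_eq_bot {W K : Submodule 𝕜 E}
    [W.HasOrthogonalProjection] (hle : W ≤ K) (h : Wᗮ ⊓ K = ⊥) : W = K :=
  calc W = W ⊔ Wᗮ ⊓ K := by rw [h, sup_bot_eq]
    _ = (W ⊔ Wᗮ) ⊓ K := (sup_inf_assoc_of_le _ hle).symm
    _ = K := by rw [Submodule.sup_orthogonal_of_hasOrthogonalProjection, top_inf_eq]

theorem finrank_orthogonal_span_singleton_eq_sub_one [FiniteDimensional 𝕜 E] {u : E}
    (hu : u ≠ 0) : Module.finrank 𝕜 (𝕜 ∙ u)ᗮ = Module.finrank 𝕜 E - 1 := by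
  have := Submodule.finrank_add_finrank_orthogonal (𝕜 ∙ u)
  rw [finrank_span_singleton hu] at this
  omega

end InnerProductSpace

section RealInnerProductSpace

variable {E : Type*} [NormedAddCommGroup E] [InnerProductSpace ℝ E]

theorem inner_eq_of_mem_affineSpan {s : Set E} {u x : E} {c : ℝ} (h : ∀ y ∈ s, ⟪u, y⟫ = c)
    (hx : x ∈ affineSpan ℝ s) : ⟪u, x⟫ = c :=
  AffineMap.eqOn_affineSpan (f := (innerₛₗ ℝ u).toAffineMap) (g := AffineMap.const ℝ E c) h hx

theorem vectorSpan_le_orthogonal_of_inner_eq {s : Set E} {u : E} {c : ℝ}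
    (h : ∀ x ∈ s, ⟪u, x⟫ = c) : vectorSpan ℝ s ≤ (ℝ ∙ u)ᗮ := by
  rw [vectorSpan_def, Submodule.span_le]
  rintro _ ⟨x, hx, y, hy, rfl⟩
  rw [SetLike.mem_coe, Submodule.mem_orthogonal_singleton_iff_inner_right]
  dsimp only
  rw [vsub_eq_sub,
    inner_sub_right, h x hx, h y hy, sub_self]

theorem inner_eq_of_mem_orthogonal_vectorSpan {s : Set E} {v x y : E}
    (hv : v ∈ (vectorSpan ℝ s)ᗮ) (hx : x ∈ s) (hy : y ∈ s) : ⟪v, x⟫ = ⟪v, y⟫ := by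
  have := Submodule.inner_left_of_mem_orthogonal (vsub_mem_vectorSpan ℝ hx hy) hv
  rwa [vsub_eq_sub, inner_sub_right, sub_eq_zero] at this

theorem inner_le_of_mem_convexHull {s : Set E} {u y : E} {a : ℝ} (h : ∀ x ∈ s, ⟪u, x⟫ ≤ a)
    (hy : y ∈ convexHull ℝ s) : ⟪u, y⟫ ≤ a :=
  convexHull_min h (convex_halfSpace_le (innerₛₗ ℝ u).isLinear a) hy

end RealInnerProductSpace

section SupportFunction

variable {K : Set (Euc d)} {u x y : Euc d}

theorem suppFn_eq_sSup_image (K : Set (Euc d)) (u : Euc d) :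
    suppFn K u = sSup ((⟪u, ·⟫) '' K) := by
  simp only [suppFn, Set.image, eq_comm]

theorem suppFn_smul_of_nonneg (K : Set (Euc d)) (u : Euc d) {r : ℝ} (hr : 0 ≤ r) :
    suppFn K (r • u) = r * suppFn K u := by
  simp only [suppFn_eq_sSup_image, real_inner_smul_left]
  rw [← smul_eq_mul, ← Real.sSup_smul_of_nonneg hr, ← Set.image_smul, Set.image_image]
  rfl

theorem dirWidth_smul_of_nonneg (K : Set (Euc d)) (u : Euc d) {r : ℝ} (hr : 0 ≤ r) :
    dirWidth K (r • u) = r * dirWidth K u := by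
  rw [dirWidth, dirWidth, ← smul_neg, suppFn_smul_of_nonneg K _ hr,
    suppFn_smul_of_nonneg K _ hr, mul_add]

theorem suppFn_eq_of_forall_le (hx : x ∈ K) (h : ∀ y ∈ K, ⟪u, y⟫ ≤ ⟪u, x⟫) :
    suppFn K u = ⟪u, x⟫ := by
  rw [suppFn_eq_sSup_image]
  exact IsGreatest.csSup_eq ⟨Set.mem_image_of_mem _ hx, Set.forall_mem_image.2 h⟩

theorem le_suppFn (hK : IsCompact K) (hx : x ∈ K) : ⟪u, x⟫ ≤ suppFn K u := by
  rw [suppFn_eq_sSup_image]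
  exact le_csSup (hK.image (continuous_const.inner continuous_id)).bddAbove
    (Set.mem_image_of_mem _ hx)

theorem suppSet_nonempty (hK : IsCompact K) (hne : K.Nonempty) (u : Euc d) :
    (suppSet K u).Nonempty := by
  obtain ⟨x, hx, hmax⟩ :=
    hK.exists_isMaxOn hne (continuous_const.inner continuous_id).continuousOn (f := (⟪u, ·⟫))
  exact ⟨x, hx, (suppFn_eq_of_forall_le hx hmax).symm⟩

theorem inner_eq_neg_suppFn_neg (hx : x ∈ suppSet K (-u)) : ⟪u, x⟫ = -suppFn K (-u) := by
  rw [← hx.2, inner_neg_left, neg_neg]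

theorem inner_sub_le_dirWidth (hK : IsCompact K) (hx : x ∈ K) (hy : y ∈ K) :
    ⟪u, x - y⟫ ≤ dirWidth K u := by
  have hux := le_suppFn (u := u) hK hx
  have huy := le_suppFn (u := -u) hK hy
  rw [inner_neg_left] at huy
  rw [inner_sub_right, dirWidth]
  linarith

theorem minWidth_le_dirWidth (hK : IsCompact K) (hne : K.Nonempty) (hu : ‖u‖ = 1) :
    minWidth K ≤ dirWidth K u := by
  obtain ⟨x, hx⟩ := hne
  refine csInf_le ⟨0, ?_⟩ ⟨u, hu, rfl⟩
  rintro _ ⟨w, -, rfl⟩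
  simpa using inner_sub_le_dirWidth (u := w) hK hx hx

theorem dirWidth_pos (hK : IsCompact K) (hint : (interior K).Nonempty) (hu : u ≠ 0) :
    0 < dirWidth K u := by
  obtain ⟨x₀, hx₀⟩ := hint
  have hline : ∀ σ : ℝ, ∀ᶠ t in 𝓝 (0 : ℝ), x₀ + (σ * t) • u ∈ K := fun σ =>
    (Continuous.tendsto' (by fun_prop) 0 x₀ (by simp)).eventually_mem
      (mem_interior_iff_mem_nhds.1 hx₀)
  obtain ⟨t, ⟨htpos, htneg⟩, ht⟩ :=
    (((hline 1).and (hline (-1))).filter_mono nhdsWithin_le_nhds).and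
      (self_mem_nhdsWithin (s := Set.Ioi 0)) |>.exists
  calc 0 < 2 * t * ‖u‖ ^ 2 := by have := norm_pos_iff.2 hu; positivity
    _ = ⟪u, (x₀ + (1 * t) • u) - (x₀ + (-1 * t) • u)⟫ := by
      rw [add_sub_add_left_eq_sub, ← sub_smul, real_inner_smul_right, real_inner_self_eq_norm_sq]
      ring
    _ ≤ dirWidth K u := inner_sub_le_dirWidth hK htpos htneg

theorem dirWidth_le_affDist (hK : IsCompact K) (hne : K.Nonempty) (hu : ‖u‖ = 1) :
    dirWidth K u ≤ affDist (suppSet K u) (suppSet K (-u)) := by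
  obtain ⟨x₁, hx₁⟩ := suppSet_nonempty hK hne u
  obtain ⟨x₂, hx₂⟩ := suppSet_nonempty hK hne (-u)
  refine le_csInf ⟨_, x₁, subset_affineSpan ℝ _ hx₁, x₂, subset_affineSpan ℝ _ hx₂, rfl⟩ ?_
  rintro _ ⟨x, hx, y, hy, rfl⟩
  have hux : ⟪u, x⟫ = suppFn K u := inner_eq_of_mem_affineSpan (fun z hz => hz.2) hx
  have huy : ⟪u, y⟫ = -suppFn K (-u) :=
    inner_eq_of_mem_affineSpan (fun z hz => inner_eq_neg_suppFn_neg hz) hy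
  calc dirWidth K u = ⟪u, x - y⟫ := by rw [inner_sub_right, hux, huy, dirWidth, sub_neg_eq_add]
    _ ≤ ‖u‖ * ‖x - y‖ := real_inner_le_norm _ _
    _ = dist x y := by rw [hu, one_mul, dist_eq_norm]

end SupportFunction

section Polytope

variable {P : Set (Euc d)} {u v : Euc d}

theorem IsPolytope.isCompact (hP : IsPolytope P) : IsCompact P := by
  obtain ⟨V, rfl⟩ := hP
  exact V.finite_toSet.isCompact_convexHull (𝕜 := ℝ)

/-- Tilting `u` towards `v` keeps the maximum of `⟪u, ·⟫` on the face `suppSet P u`, since every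
vertex of `P` outside that face falls short of it by a positive margin. -/
theorem IsPolytope.eventually_suppFn_add_smul (hP : IsPolytope P) (hne : P.Nonempty) {c : ℝ}
    (hc : ∀ x ∈ suppSet P u, ⟪v, x⟫ = c) :
    ∀ᶠ t in 𝓝 (0 : ℝ), suppFn P (u + t • v) = suppFn P u + t * c := by
  have hK := hP.isCompact
  obtain ⟨x₀, hx₀⟩ := suppSet_nonempty hK hne u
  obtain ⟨V, rfl⟩ := hP
  have hvert : ∀ x ∈ V, ∀ᶠ t in 𝓝 (0 : ℝ), ⟪u + t • v, x⟫ ≤ suppFn (convexHull ℝ ↑V) u + t * c := by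
    intro x hxV
    by_cases hxF : x ∈ suppSet (convexHull ℝ ↑V) u
    · refine Eventually.of_forall fun t => le_of_eq ?_
      rw [inner_add_left, real_inner_smul_left, hxF.2, hc x hxF]
    · have hxP := subset_convexHull ℝ (V : Set (Euc d)) hxV
      have hlt : ⟪u, x⟫ < suppFn (convexHull ℝ ↑V) u :=
        (le_suppFn hK hxP).lt_of_ne fun h => hxF ⟨hxP, h⟩
      refine (ContinuousAt.eventually_lt (by fun_prop) (by fun_prop) ?_).mono fun t ht => ht.le
      simpa using hlt
  filter_upwards [(eventually_all_finset V).2 hvert] with t ht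
  have hx₀t : ⟪u + t • v, x₀⟫ = suppFn (convexHull ℝ ↑V) u + t * c := by
    rw [inner_add_left, real_inner_smul_left, hx₀.2, hc x₀ hx₀]
  rw [← hx₀t]
  exact suppFn_eq_of_forall_le hx₀.1 fun y hy => hx₀t ▸ inner_le_of_mem_convexHull ht hy

theorem IsPolytope.eventually_dirWidth_add_smul (hP : IsPolytope P) (hne : P.Nonempty)
    {c₁ c₂ : ℝ} (hc₁ : ∀ x ∈ suppSet P u, ⟪v, x⟫ = c₁) (hc₂ : ∀ x ∈ suppSet P (-u), ⟪v, x⟫ = c₂) :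
    ∀ᶠ t in 𝓝 (0 : ℝ), dirWidth P (u + t • v) = dirWidth P u + t * (c₁ - c₂) := by
  have hc₂' : ∀ x ∈ suppSet P (-u), ⟪-v, x⟫ = -c₂ := fun x hx => by rw [inner_neg_left, hc₂ x hx]
  filter_upwards [hP.eventually_suppFn_add_smul hne hc₁, hP.eventually_suppFn_add_smul hne hc₂']
    with t h₁ h₂
  rw [dirWidth, dirWidth, neg_add, ← smul_neg, h₁, h₂]
  ring

theorem IsPolytope.minWidth_lt_dirWidth_of_tilt (hP : IsPolytope P) (hne : P.Nonempty)
    (hu : ‖u‖ = 1) (hw : 0 < dirWidth P u) (huv : ⟪u, v⟫ = 0) (hv : v ≠ 0) {c₁ c₂ : ℝ}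
    (hc₁ : ∀ x ∈ suppSet P u, ⟪v, x⟫ = c₁) (hc₂ : ∀ x ∈ suppSet P (-u), ⟪v, x⟫ = c₂)
    (hc : c₁ ≤ c₂) : minWidth P < dirWidth P u := by
  obtain ⟨t, ht_eq, ht⟩ := ((hP.eventually_dirWidth_add_smul hne hc₁ hc₂).filter_mono
    nhdsWithin_le_nhds).and (self_mem_nhdsWithin (s := Set.Ioi 0)) |>.exists
  have ht : 0 < t := ht
  have hnorm : 1 < ‖u + t • v‖ := by
    have hsq : ‖u + t • v‖ ^ 2 = 1 + (t * ‖v‖) ^ 2 := by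
      rw [norm_add_sq_real, hu, real_inner_smul_right, huv, norm_smul, Real.norm_of_nonneg ht.le]
      ring
    have : 0 < t * ‖v‖ := mul_pos ht (norm_pos_iff.2 hv)
    nlinarith [norm_nonneg (u + t • v)]
  have hpos : 0 < ‖u + t • v‖ := one_pos.trans hnorm
  calc minWidth P ≤ dirWidth P (‖u + t • v‖⁻¹ • (u + t • v)) :=
        minWidth_le_dirWidth hP.isCompact hne (norm_smul_inv_norm (norm_pos_iff.1 hpos))
    _ = ‖u + t • v‖⁻¹ * (dirWidth P u + t * (c₁ - c₂)) := by
      rw [dirWidth_smul_of_nonneg _ _ (inv_nonneg.2 hpos.le), ht_eq]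
    _ ≤ ‖u + t • v‖⁻¹ * dirWidth P u := by
      gcongr
      nlinarith
    _ < dirWidth P u := (inv_mul_lt_iff₀ hpos).2 (lt_mul_of_one_lt_left hw hnorm)

theorem IsPolytope.minWidth_lt_dirWidth_of_mem_orthogonal (hP : IsPolytope P) (hne : P.Nonempty)
    (hu : ‖u‖ = 1) (hw : 0 < dirWidth P u) (hvu : v ∈ (ℝ ∙ u)ᗮ)
    (hvF : v ∈ (vectorSpan ℝ (suppSet P u) ⊔ vectorSpan ℝ (suppSet P (-u)))ᗮ) (hv : v ≠ 0) :
    minWidth P < dirWidth P u := by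
  rw [← Submodule.inf_orthogonal] at hvF
  rw [Submodule.mem_orthogonal_singleton_iff_inner_right] at hvu
  obtain ⟨x₁, hx₁⟩ := suppSet_nonempty hP.isCompact hne u
  obtain ⟨x₂, hx₂⟩ := suppSet_nonempty hP.isCompact hne (-u)
  have hc₁ : ∀ x ∈ suppSet P u, ⟪v, x⟫ = ⟪v, x₁⟫ := fun x hx =>
    inner_eq_of_mem_orthogonal_vectorSpan hvF.1 hx hx₁
  have hc₂ : ∀ x ∈ suppSet P (-u), ⟪v, x⟫ = ⟪v, x₂⟫ := fun x hx =>
    inner_eq_of_mem_orthogonal_vectorSpan hvF.2 hx hx₂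
  rcases le_total ⟪v, x₁⟫ ⟪v, x₂⟫ with h | h
  · exact hP.minWidth_lt_dirWidth_of_tilt hne hu hw hvu hv hc₁ hc₂ h
  · refine hP.minWidth_lt_dirWidth_of_tilt hne hu hw (v := -v) (c₁ := -⟪v, x₁⟫)
      (c₂ := -⟪v, x₂⟫) (by rw [inner_neg_right, hvu, neg_zero]) (neg_ne_zero.2 hv)
      (fun x hx => by rw [inner_neg_left, hc₁ x hx]) (fun x hx => by rw [inner_neg_left, hc₂ x hx])
      (neg_le_neg h)

end Polytope

theorem gritzmann_klee_general {d : ℕ} (P F₁ F₂ : Set (Euc d))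
    (hP : IsPolytope P) (hint : (interior P).Nonempty)
    (hanti : StrictlyAntipodal P F₁ F₂)
    (hdist : affDist F₁ F₂ = minWidth P) :
    affDim (F₁ + F₂) = d - 1 := by
  obtain ⟨-, u, hu, rfl, rfl⟩ := hanti
  have hne : P.Nonempty := hint.mono interior_subset
  have hu0 : u ≠ 0 := norm_ne_zero_iff.1 (by rw [hu]; exact one_ne_zero)
  have hw : 0 < dirWidth P u := dirWidth_pos hP.isCompact hint hu0
  have hspan : vectorSpan ℝ (suppSet P u) ⊔ vectorSpan ℝ (suppSet P (-u)) = (ℝ ∙ u)ᗮ := by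
    refine Submodule.eq_of_le_of_orthogonal_inf_eq_bot
      (sup_le (vectorSpan_le_orthogonal_of_inner_eq fun x hx => hx.2)
        (vectorSpan_le_orthogonal_of_inner_eq fun x hx => inner_eq_neg_suppFn_neg hx))
      ((Submodule.eq_bot_iff _).2 fun v ⟨hvF, hvu⟩ => ?_)
    by_contra hv
    exact (hP.minWidth_lt_dirWidth_of_mem_orthogonal hne hu hw hvu hvF hv).not_ge
      (hdist ▸ dirWidth_le_affDist hP.isCompact hne hu)
  rw [affDim, direction_affineSpan, vectorSpan_add (suppSet_nonempty hP.isCompact hne u)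
    (suppSet_nonempty hP.isCompact hne (-u)), hspan, finrank_orthogonal_span_singleton_eq_sub_one hu0,
    finrank_euclideanSpace_fin]

/-- If `F₁` and `F₂` are strictly antipodal faces of a polytope `P ⊆ ℝ^d` with nonempty
interior, whose distance equals the minimum width of `P`, then the Minkowski sum
`F₁ + F₂` has affine dimension `d - 1`. -/
theorem gritzmann_klee {d : ℕ} (P F₁ F₂ : Set (Euc d))
    (hP : IsPolytope P) (hint : (interior P).Nonempty)
    (hF₁ : IsFaceOf P F₁) (hF₂ : IsFaceOf P F₂)
    (hanti : StrictlyAntipodal P F₁ F₂)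
    (hdist : affDist F₁ F₂ = minWidth P) :
    affDim (F₁ + F₂) = d - 1 :=
  gritzmann_klee_general P F₁ F₂ hP hint hanti hdist
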